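/- Every vertex of a simple graph G has a ds-completable card if and only if no two vertex degrees of G differ by exactly 1. -/
import Mathlib


open SimpleGraph Finset
open scoped Classical

variable {V : Type*}

/-- The degree of a vertex `u` in a simple graph `G`. -/
noncomputable def deg (G : SimpleGraph V) (u : V) : ℕ := (G.neighborSet u).ncard

/-- The degree of `u` in the card `G − v` (the vertex-deleted subgraph at `v`). -/
noncomputable def cardDeg (G : SimpleGraph V) (v u : V) : ℕ := (G.neighborSet u \ {v}).ncard

/-- The card `G − v` is ds-completable: for each degree `d`, the vertices of degree `d`
in `G − v` are either all neighbours of `v` in `G` or all non-neighbours of `v` in `G`. -/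
def DsCompletable (G : SimpleGraph V) (v : V) : Prop :=
  ∀ d : ℕ, (∀ u, u ≠ v → cardDeg G v u = d → G.Adj v u) ∨
           (∀ u, u ≠ v → cardDeg G v u = d → ¬ G.Adj v u)

/-- A vertex is bad if the graph contains a vertex of degree one less. -/
def Bad (G : SimpleGraph V) (v : V) : Prop := ∃ w, deg G w + 1 = deg G v

/-- A vertex is dull if the graph contains a vertex of degree one more. -/
def Dull (G : SimpleGraph V) (v : V) : Prop := ∃ w, deg G w = deg G v + 1

/-- ε(s,t): the number of stubs on `s` used by edges from `s` to `t`
(for disjoint `s`, `t` this is the number of edges between them; for `s = t`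
it is twice the number of edges inside `s`). -/
noncomputable def stubs (G : SimpleGraph V) (s t : Finset V) : ℕ :=
  ((s ×ˢ t).filter fun p => G.Adj p.1 p.2).card

/-- A vertex set is neighbourly if no vertex outside the set has a degree one less
than that of a vertex in the set. -/
def Neighbourly (G : SimpleGraph V) (K : Finset V) : Prop :=
  ∀ u ∉ K, ∀ w ∈ K, deg G u + 1 ≠ deg G w

/-- A vertex set is `d`-neighbourly if it contains a vertex `v` of degree `d` such that
no vertex outside the set has a degree one less than that of any member other than `v`. -/
def DNeighbourly (G : SimpleGraph V) (d : ℕ) (K : Finset V) : Prop :=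
  ∃ v ∈ K, deg G v = d ∧ ∀ u ∉ K, ∀ w ∈ K, w ≠ v → deg G u + 1 ≠ deg G w


lemma cardDeg_of_adj [Fintype V] (G : SimpleGraph V) {v u : V} (h : G.Adj v u) :
    cardDeg G v u + 1 = deg G u := by
  have hv : v ∈ G.neighborSet u := h.symm
  simpa [cardDeg, deg] using Set.ncard_diff_singleton_add_one hv (Set.toFinite _)

lemma cardDeg_of_not_adj [Fintype V] (G : SimpleGraph V) {v u : V} (h : ¬ G.Adj v u) :
    cardDeg G v u = deg G u := by
  unfold cardDeg deg
  rw [Set.diff_singleton_eq_self]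
  intro hv
  exact h ((G.mem_neighborSet u v).mp hv).symm

/-- Every vertex of `G` has a ds-completable card iff no two degrees differ by exactly 1. -/
theorem stmt8 [Fintype V] (G : SimpleGraph V) :
    (∀ v : V, DsCompletable G v) ↔ (∀ u w : V, deg G u ≠ deg G w + 1) := by
  constructor
  · intro H a b hab
    have key : G.neighborSet a ⊆ insert b (G.neighborSet b) := by
      intro v hv
      have hva : G.Adj v a := ((G.mem_neighborSet a v).mp hv).symm
      have hd : cardDeg G v a + 1 = deg G a := cardDeg_of_adj G hva
      rcases H v (cardDeg G v a) with h | h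
      · by_cases hvb : v = b
        · exact hvb ▸ Set.mem_insert _ _
        by_cases hadj : G.Adj v b
        · exact Set.mem_insert_of_mem _ hadj.symm
        · have h2 : cardDeg G v b = deg G b := cardDeg_of_not_adj G hadj
          have : cardDeg G v b = cardDeg G v a := by omega
          exact absurd (h b (fun hb => hvb hb.symm) this) hadj
      · exact absurd hva (h a hva.ne' rfl)
    have hbb : b ∉ G.neighborSet b := fun h => G.irrefl h
    have hcard : (insert b (G.neighborSet b)).ncard ≤ (G.neighborSet a).ncard := by
      rw [Set.ncard_insert_of_notMem hbb (Set.toFinite _)]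
      have : (G.neighborSet b).ncard + 1 = deg G b + 1 := rfl
      show (G.neighborSet b).ncard + 1 ≤ deg G a
      omega
    have heq : G.neighborSet a = insert b (G.neighborSet b) :=
      Set.eq_of_subset_of_ncard_le key hcard (Set.toFinite _)
    have hba : G.Adj a b := by
      have : b ∈ G.neighborSet a := heq ▸ Set.mem_insert _ _
      exact this
    have : a ∈ G.neighborSet a := by
      rw [heq]
      exact Set.mem_insert_of_mem _ hba.symm
    exact G.irrefl this
  · intro H v d
    by_cases h : ∃ u, u ≠ v ∧ cardDeg G v u = d ∧ ¬ G.Adj v u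
    · right
      obtain ⟨u2, hu2v, hu2d, hu2a⟩ := h
      intro u huv hud hadj
      have h1 : cardDeg G v u + 1 = deg G u := cardDeg_of_adj G hadj
      have h2 : cardDeg G v u2 = deg G u2 := cardDeg_of_not_adj G hu2a
      exact absurd (show deg G u = deg G u2 + 1 by omega) (H u u2)
    · left
      intro u huv hud
      by_contra hadj
      exact h ⟨u, huv, hud, hadj⟩
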